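/- Let Ω ⊂ ℝⁿ have finite positive Lebesgue measure |Ω|, let γ ∈ L¹(ℝⁿ) be even, and let F : Ω × ℝ → ℝ be a Carathéodory function satisfying |F(x,t)| ≤ a₁|t| + (a₂/(α+1))|t|^{α+1} for all x ∈ Ω, t ∈ ℝ, and such that for every ε ∈ (0,1) there exists K̃(ε) > 0 with F(x,t) ≥ t²/ε − K̃(ε)/ε for all x ∈ Ω and all t ≥ 0. Let u ∈ L²(ℝⁿ) vanish almost everywhere outside Ω, with u ≥ 0 almost everywhere, u|_Ω ∈ L^{α+1}(Ω), and ‖u‖_{L²(Ω)} > 0. Then I[tu]/t² → −∞ as t → +∞, where I[w] := (1/2) B[w,w] − ∫_Ω F(x, w(x)) dx. -/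

import Mathlib

/-!
Since `B` is quadratic, `I[tu]/t² = B[u,u]/2 - t⁻² ∫_Ω F(x, tu)`. The growth condition gives
`∫_Ω F(x, tu) ≥ t² ‖u‖²/ε - K(ε)|Ω|/ε`, so `I[tu]/t² ≤ B[u,u]/2 - ‖u‖²/ε + O(t⁻²)`, and `ε → 0`
sends the bound to `-∞`. The bound on `|F|` serves to make `F(x, tu)` integrable, so that its
integral is not the junk value `0`.
-/

open MeasureTheory Filter

/-- The nonlocal bilinear form
`B[u,v] = (1/2) ∬ (u(y)-u(x)) γ(x-y) (v(y)-v(x)) dy dx`. -/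
noncomputable def nonlocalForm (n : ℕ) (γ u v : EuclideanSpace ℝ (Fin n) → ℝ) : ℝ :=
  (1/2) * ∫ x, ∫ y, (u y - u x) * γ (x - y) * (v y - v x)

/-- The energy `I[w] = (1/2) B[w,w] − ∫_Ω F(x,w(x)) dx`. -/
noncomputable def energyF (n : ℕ) (Ω : Set (EuclideanSpace ℝ (Fin n)))
    (γ : EuclideanSpace ℝ (Fin n) → ℝ) (F : EuclideanSpace ℝ (Fin n) → ℝ → ℝ)
    (w : EuclideanSpace ℝ (Fin n) → ℝ) : ℝ :=
  (1/2) * nonlocalForm n γ w w - ∫ x in Ω, F x (w x)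

open Topology TopologicalSpace

theorem nonlocalForm_const_mul (n : ℕ) (γ u v : EuclideanSpace ℝ (Fin n) → ℝ) (s t : ℝ) :
    nonlocalForm n γ (fun x => s * u x) (fun x => t * v x) = s * t * nonlocalForm n γ u v := by
  have h : ∀ x y : EuclideanSpace ℝ (Fin n),
      (s * u y - s * u x) * γ (x - y) * (t * v y - t * v x)
        = s * t * ((u y - u x) * γ (x - y) * (v y - v x)) := fun x y => by ring
  simp only [nonlocalForm, h, integral_const_mul]
  ring

theorem tendsto_atBot_of_le_sub_div_add_div_sq {f : ℝ → ℝ} {A S : ℝ} (hS : 0 < S)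
    (h : ∀ ε ∈ Set.Ioo (0:ℝ) 1, ∃ K, ∀ᶠ t in atTop, f t ≤ A - S / ε + K / t ^ 2) :
    Tendsto f atTop atBot := by
  refine tendsto_atBot.2 fun M => ?_
  have hdiv : Tendsto (fun ε => A - S / ε) (𝓝[>] 0) atBot := by
    simpa [sub_eq_add_neg, div_eq_mul_inv] using tendsto_atBot_add_const_left _ A
      (tendsto_neg_atTop_atBot.comp (tendsto_inv_nhdsGT_zero.const_mul_atTop hS))
  obtain ⟨ε, hε01, hεM⟩ :=
    (Filter.Eventually.and (Ioo_mem_nhdsGT one_pos)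
      (hdiv.eventually (eventually_le_atBot (M - 1)))).exists
  obtain ⟨K, hK⟩ := h ε hε01
  have hsmall : ∀ᶠ t : ℝ in atTop, K / t ^ 2 ≤ 1 :=
    (tendsto_const_nhds.div_atTop (tendsto_pow_atTop two_ne_zero)).eventually
      (eventually_le_nhds one_pos)
  filter_upwards [hK, hsmall] with t h1 h2
  linarith

theorem AEMeasurable.caratheodory_comp {X ι β : Type*} [MeasurableSpace X] {μ : Measure X}
    [TopologicalSpace ι] [MetrizableSpace ι] [MeasurableSpace ι] [SecondCountableTopology ι]
    [OpensMeasurableSpace ι] [MeasurableSpace β] [TopologicalSpace β] [PseudoMetrizableSpace β]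
    [BorelSpace β] {F : X → ι → β} (hFmeas : ∀ t, Measurable fun x => F x t)
    (hFcont : ∀ x, Continuous (F x)) {g : X → ι} (hg : AEMeasurable g μ) :
    AEMeasurable (fun x => F x (g x)) μ :=
  (measurable_uncurry_of_continuous_of_measurable hFcont hFmeas).comp_aemeasurable
    (hg.prodMk aemeasurable_id)

theorem MeasureTheory.Integrable.caratheodory_comp_of_abs_le {X : Type*} [MeasurableSpace X]
    {μ : Measure X} {F : X → ℝ → ℝ} (hFmeas : ∀ t, Measurable fun x => F x t)
    (hFcont : ∀ x, Continuous (F x))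
    {a b p : ℝ} (hp : 0 < p) (hF : ∀ᵐ x ∂μ, ∀ t, |F x t| ≤ a * |t| + b * |t| ^ p)
    {g : X → ℝ} (hg : Integrable g μ) (hgp : MemLp g (ENNReal.ofReal p) μ) :
    Integrable (fun x => F x (g x)) μ := by
  have hgp' : Integrable (fun x => |g x| ^ p) μ := by
    simpa [ENNReal.toReal_ofReal hp.le, Real.norm_eq_abs] using
      hgp.integrable_norm_rpow (ENNReal.ofReal_pos.2 hp).ne' ENNReal.ofReal_ne_top
  refine ((hg.abs.const_mul a).add (hgp'.const_mul b)).mono'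
    (hg.aemeasurable.caratheodory_comp hFmeas hFcont).aestronglyMeasurable ?_
  filter_upwards [hF] with x hx using hx (g x)

theorem mul_integral_sq_sub_le_integral {X : Type*} [MeasurableSpace X] {μ : Measure X}
    [IsFiniteMeasure μ] {u G : X → ℝ} {c d : ℝ} (hu : MemLp u 2 μ) (hG : Integrable G μ)
    (h : ∀ᵐ x ∂μ, c * u x ^ 2 - d ≤ G x) :
    c * ∫ x, u x ^ 2 ∂μ - d * μ.real Set.univ ≤ ∫ x, G x ∂μ := by
  have hlow : Integrable (fun x => c * u x ^ 2 - d) μ :=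
    (hu.integrable_sq.const_mul c).sub (integrable_const d)
  calc c * ∫ x, u x ^ 2 ∂μ - d * μ.real Set.univ = ∫ x, (c * u x ^ 2 - d) ∂μ := by
        rw [integral_sub (hu.integrable_sq.const_mul c) (integrable_const d), integral_const_mul,
          integral_const, smul_eq_mul, mul_comm d]
    _ ≤ ∫ x, G x ∂μ := integral_mono_ae hlow hG h

theorem energy_ray_to_neg_infty_general
    (n : ℕ) (Ω : Set (EuclideanSpace ℝ (Fin n))) (hΩ : MeasurableSet Ω)
    (hΩfin : volume Ω < ⊤)
    (γ : EuclideanSpace ℝ (Fin n) → ℝ)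
    (F : EuclideanSpace ℝ (Fin n) → ℝ → ℝ)
    (hFmeas : ∀ t : ℝ, Measurable fun x => F x t)
    (hFcont : ∀ x, Continuous (F x))
    (a₁ a₂ α : ℝ) (hα : 1 < α)
    (hFbound : ∀ x ∈ Ω, ∀ t : ℝ,
      |F x t| ≤ a₁ * |t| + a₂ / (α + 1) * |t| ^ (α + 1))
    (hFgrow : ∀ ε ∈ Set.Ioo (0:ℝ) 1, ∃ K > (0:ℝ), ∀ x ∈ Ω, ∀ t : ℝ, 0 ≤ t →
      t ^ 2 / ε - K / ε ≤ F x t)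
    (u : EuclideanSpace ℝ (Fin n) → ℝ)
    (hu2 : MemLp u 2 (volume : Measure (EuclideanSpace ℝ (Fin n))))
    (hunn : ∀ᵐ x, 0 ≤ u x)
    (huα : MemLp u (ENNReal.ofReal (α + 1)) (volume.restrict Ω))
    (hunz : 0 < ∫ x in Ω, (u x) ^ 2) :
    Tendsto (fun t : ℝ => energyF n Ω γ F (fun x => t * u x) / t ^ 2)
      atTop atBot := by
  have : IsFiniteMeasure (volume.restrict Ω) := isFiniteMeasure_restrict.2 hΩfin.ne
  have hu2Ω : MemLp u 2 (volume.restrict Ω) := hu2.restrict Ω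
  have hF_int (t : ℝ) : Integrable (fun x => F x (t * u x)) (volume.restrict Ω) :=
    .caratheodory_comp_of_abs_le hFmeas hFcont (by linarith)
      ((ae_restrict_iff' hΩ).2 (ae_of_all _ hFbound))
      ((hu2Ω.integrable one_le_two).const_mul t) (huα.const_mul t)
  refine tendsto_atBot_of_le_sub_div_add_div_sq (A := nonlocalForm n γ u u / 2) hunz
    fun ε hε => ?_
  obtain ⟨K, -, hK⟩ := hFgrow ε hε
  refine ⟨K / ε * (volume.restrict Ω).real Set.univ, ?_⟩
  filter_upwards [eventually_gt_atTop 0] with t ht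
  have hF_low :=
    mul_integral_sq_sub_le_integral (c := t ^ 2 / ε) (d := K / ε) hu2Ω (hF_int t) <| by
      filter_upwards [ae_restrict_mem hΩ, ae_restrict_of_ae hunn] with x hx hux
      convert hK x hx (t * u x) (mul_nonneg ht.le hux) using 1
      ring
  rw [energyF, nonlocalForm_const_mul, div_le_iff₀ (by positivity)]
  calc _ ≤ 1 / 2 * (t * t * nonlocalForm n γ u u) - (t ^ 2 / ε * ∫ x in Ω, u x ^ 2)
        + K / ε * (volume.restrict Ω).real Set.univ := by linarith
    _ = _ := by field_simp

/-- Under the superquadratic growth condition on `F`, for a nonnegative, nontrivial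
`u ∈ L²(ℝⁿ) ∩ L^{α+1}(Ω)` vanishing a.e. outside `Ω` one has `I[tu]/t² → −∞` as
`t → +∞`. -/
theorem energy_ray_to_neg_infty
    (n : ℕ) (Ω : Set (EuclideanSpace ℝ (Fin n))) (hΩ : MeasurableSet Ω)
    (hΩfin : volume Ω < ⊤) (hΩpos : 0 < volume Ω)
    (γ : EuclideanSpace ℝ (Fin n) → ℝ)
    (hγ : Integrable γ) (hγeven : ∀ z, γ (-z) = γ z)
    (F : EuclideanSpace ℝ (Fin n) → ℝ → ℝ)
    (hFmeas : ∀ t : ℝ, Measurable fun x => F x t)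
    (hFcont : ∀ x, Continuous (F x))
    (a₁ a₂ α : ℝ) (ha₁ : 0 < a₁) (ha₂ : 0 < a₂) (hα : 1 < α)
    (hFbound : ∀ x ∈ Ω, ∀ t : ℝ,
      |F x t| ≤ a₁ * |t| + a₂ / (α + 1) * |t| ^ (α + 1))
    (hFgrow : ∀ ε ∈ Set.Ioo (0:ℝ) 1, ∃ K > (0:ℝ), ∀ x ∈ Ω, ∀ t : ℝ, 0 ≤ t →
      t ^ 2 / ε - K / ε ≤ F x t)
    (u : EuclideanSpace ℝ (Fin n) → ℝ)
    (hu2 : MemLp u 2 (volume : Measure (EuclideanSpace ℝ (Fin n))))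
    (hu0 : ∀ᵐ x, x ∉ Ω → u x = 0)
    (hunn : ∀ᵐ x, 0 ≤ u x)
    (huα : MemLp u (ENNReal.ofReal (α + 1)) (volume.restrict Ω))
    (hunz : 0 < ∫ x in Ω, (u x) ^ 2) :
    Tendsto (fun t : ℝ => energyF n Ω γ F (fun x => t * u x) / t ^ 2)
      atTop atBot :=
  energy_ray_to_neg_infty_general n Ω hΩ hΩfin γ F hFmeas hFcont a₁ a₂ α hα hFbound hFgrow u hu2
    hunn huα hunz
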